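/- Let X be a path-connected space with basepoint x₀, and suppose X is an H-SLT space at x₀ and H is locally quasinormal. If X is homotopically Hausdorff relative to H, then X is homotopically path Hausdorff relative to H. -/

import Mathlib

open CategoryTheory Topology
open scoped Pointwise

noncomputable section
namespace Paper

variable {X : Type*} [TopologicalSpace X]

attribute [local instance] Path.Homotopic.setoid

/-- The homotopy class of a loop as an element of the fundamental group. -/
def loopClass {x : X} (γ : Path x x) : FundamentalGroup X x :=
  FundamentalGroup.fromPath (Path.Homotopic.Quotient.mk γ)

/-- Conjugation of the fundamental group along a path: `h ↦ [ᾱ ∗ h ∗ α]`. -/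
def pathConj {x₀ x : X} (α : Path x₀ x) :
    FundamentalGroup X x₀ ≃* FundamentalGroup X x :=
  FundamentalGroup.fundamentalGroupMulEquivOfPath α

/-- The path-conjugate subgroup `H_α = [ᾱ H α]`. -/
def conjSubgroup {x₀ x : X} (H : Subgroup (FundamentalGroup X x₀)) (α : Path x₀ x) :
    Subgroup (FundamentalGroup X x) :=
  H.map (pathConj α).toMonoidHom

/-- `π(α,V)`: the subgroup of `π₁(X,x₀)` generated by classes `[α∗β∗ᾱ]`
with `β` a loop at `α(1)` lying in `V`. -/
def piSub {x₀ x : X} (α : Path x₀ x) (V : Set X) : Subgroup (FundamentalGroup X x₀) :=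
  Subgroup.closure
    {g | ∃ β : Path x x, (∀ t, β t ∈ V) ∧ g = loopClass ((α.trans β).trans α.symm)}

/-- `i₍#₎π₁(V,x)`: the image in `π₁(X,x)` of the fundamental group of `V`. -/
def loopSubgroup (x : X) (V : Set X) : Subgroup (FundamentalGroup X x) :=
  Subgroup.closure {g | ∃ β : Path x x, (∀ t, β t ∈ V) ∧ g = loopClass β}

/-- `H` is locally quasinormal. -/
def LocallyQuasinormal {x₀ : X} (H : Subgroup (FundamentalGroup X x₀)) : Prop :=
  ∀ (x : X) (α : Path x₀ x) (U : Set X), IsOpen U → x ∈ U →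
    ∃ V : Set X, V ⊆ U ∧ IsOpen V ∧ x ∈ V ∧
      (H : Set (FundamentalGroup X x₀)) * (piSub α V : Set (FundamentalGroup X x₀)) =
        (piSub α V : Set (FundamentalGroup X x₀)) * (H : Set (FundamentalGroup X x₀))

/-- `X` is an `H`-SLT space at the basepoint of `H`. -/
def SLTAt {b : X} (H : Subgroup (FundamentalGroup X b)) : Prop :=
  ∀ (x : X) (α : Path b x) (U : Set X), IsOpen U → b ∈ U →
    ∃ V : Set X, IsOpen V ∧ x ∈ V ∧
      ∀ β : Path x x, (∀ t, β t ∈ V) →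
        loopClass ((α.trans β).trans α.symm) ∈
          (H : Set (FundamentalGroup X b)) * (loopSubgroup b U : Set (FundamentalGroup X b))

/-- `X` is an `H`-SLT space. -/
def IsHSLT {x₀ : X} (H : Subgroup (FundamentalGroup X x₀)) : Prop :=
  ∀ (x : X) (δ : Path x₀ x), SLTAt (conjSubgroup H δ)

/-- `X` is a strong `H`-SLT space at the basepoint of `H`. -/
def StrongSLTAt {b : X} (H : Subgroup (FundamentalGroup X b)) : Prop :=
  ∀ (x : X) (U : Set X), IsOpen U → b ∈ U →
    ∃ V : Set X, IsOpen V ∧ x ∈ V ∧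
      ∀ (α : Path b x) (β : Path x x), (∀ t, β t ∈ V) →
        loopClass ((α.trans β).trans α.symm) ∈
          (H : Set (FundamentalGroup X b)) * (loopSubgroup b U : Set (FundamentalGroup X b))

/-- `X` is a strong `H`-SLT space. -/
def IsStrongHSLT {x₀ : X} (H : Subgroup (FundamentalGroup X x₀)) : Prop :=
  ∀ (x : X) (δ : Path x₀ x), StrongSLTAt (conjSubgroup H δ)

/-- `X` is homotopically Hausdorff relative to `H`. -/
def HomotopicallyHausdorffRel {b : X} (H : Subgroup (FundamentalGroup X b)) : Prop :=
  ∀ (x : X) (α : Path b x) (g : FundamentalGroup X b), g ∉ H →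
    ∃ U : Set X, IsOpen U ∧ x ∈ U ∧
      ∀ β : Path x x, (∀ t, β t ∈ U) →
        ∀ h ∈ H, loopClass ((α.trans β).trans α.symm) ≠ h * g

/-- `X` is homotopically path Hausdorff relative to `H`. -/
def HomotopicallyPathHausdorffRel {b : X} (H : Subgroup (FundamentalGroup X b)) : Prop :=
  ∀ (x : X) (α β : Path b x), loopClass (α.trans β.symm) ∉ H →
    ∃ (n : ℕ), 0 < n ∧
    ∃ (t : Fin (n + 1) → unitInterval) (U : Fin n → Set X),
      StrictMono t ∧ t 0 = 0 ∧ t (Fin.last n) = 1 ∧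
      (∀ i : Fin n, IsOpen (U i) ∧ ∀ s ∈ Set.Icc (t i.castSucc) (t i.succ), α s ∈ U i) ∧
      ∀ γ : Path b x,
        (∀ i : Fin n, ∀ s ∈ Set.Icc (t i.castSucc) (t i.succ), γ s ∈ U i) →
        (∀ j : Fin (n + 1), γ (t j) = α (t j)) →
        loopClass (γ.trans β.symm) ∉ H

/-- The collection of paths starting at `b`, with free endpoint. -/
def PathsFrom (b : X) := Σ x : X, Path b x

/-- The relation identifying paths in the standard construction `X̃_H`. -/
def stdRel {b : X} (H : Subgroup (FundamentalGroup X b)) :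
    PathsFrom b → PathsFrom b → Prop :=
  fun p q => ∃ h : q.1 = p.1, loopClass (p.2.trans (h ▸ q.2).symm) ∈ H

/-- The standard construction `X̃_H`. -/
def StdConstr {b : X} (H : Subgroup (FundamentalGroup X b)) := Quot (stdRel H)

/-- The class `[α]_H` of a path in the standard construction. -/
def stdClass {b : X} (H : Subgroup (FundamentalGroup X b)) (p : PathsFrom b) :
    StdConstr H :=
  Quot.mk _ p

/-- The basic whisker neighborhood `N_H([α]_H, U)`. -/
def whiskerNbhd {b : X} (H : Subgroup (FundamentalGroup X b)) (p : PathsFrom b)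
    (U : Set X) : Set (StdConstr H) :=
  {z | ∃ (y : X) (δ : Path p.1 y), (∀ t, δ t ∈ U) ∧ z = stdClass H ⟨y, p.2.trans δ⟩}

/-- The whisker topology on the standard construction. -/
def whiskerTopology {b : X} (H : Subgroup (FundamentalGroup X b)) :
    TopologicalSpace (StdConstr H) :=
  TopologicalSpace.generateFrom
    {s | ∃ (p : PathsFrom b) (U : Set X), IsOpen U ∧ p.1 ∈ U ∧ s = whiskerNbhd H p U}

/-- The Spanier subgroup `π(𝒰, y)` of `π₁(X,y)` associated to a family `𝒰` of subsets. -/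
def spanier (y : X) (𝒰 : Set (Set X)) : Subgroup (FundamentalGroup X y) :=
  Subgroup.closure
    {g | ∃ (z : X) (γ : Path y z) (β : Path z z), (∃ U ∈ 𝒰, ∀ t, β t ∈ U) ∧
          g = loopClass ((γ.trans β).trans γ.symm)}

/-- An open cover of `X`. -/
def IsOpenCover (𝒰 : Set (Set X)) : Prop :=
  (∀ U ∈ 𝒰, IsOpen U) ∧ ⋃₀ 𝒰 = Set.univ

/-- The basic lasso neighborhood `N_H([α]_H, 𝒰, U)`. -/
def lassoNbhd {b : X} (H : Subgroup (FundamentalGroup X b)) (p : PathsFrom b)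
    (𝒰 : Set (Set X)) (U : Set X) : Set (StdConstr H) :=
  {z | ∃ (l : Path p.1 p.1) (y : X) (δ : Path p.1 y),
        loopClass l ∈ spanier p.1 𝒰 ∧ (∀ t, δ t ∈ U) ∧
        z = stdClass H ⟨y, (p.2.trans l).trans δ⟩}

/-- The lasso topology on the standard construction. -/
def lassoTopology {b : X} (H : Subgroup (FundamentalGroup X b)) :
    TopologicalSpace (StdConstr H) :=
  TopologicalSpace.generateFrom
    {s | ∃ (p : PathsFrom b) (𝒰 : Set (Set X)) (U : Set X),
          IsOpenCover 𝒰 ∧ U ∈ 𝒰 ∧ IsOpen U ∧ p.1 ∈ U ∧ s = lassoNbhd H p 𝒰 U}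

/-- The endpoint projection `p_H : X̃_H → X`. -/
def endPt {b : X} (H : Subgroup (FundamentalGroup X b)) : StdConstr H → X :=
  Quot.lift (fun p => p.1) (fun _ _ h => h.1.symm)

/-- The whisker topology on the fundamental group `π₁^{wh}(X,x)`. -/
def whiskerTopOnPi (x : X) : TopologicalSpace (FundamentalGroup X x) :=
  TopologicalSpace.generateFrom
    {s | ∃ (g : FundamentalGroup X x) (U : Set X), IsOpen U ∧ x ∈ U ∧
          s = {g' | ∃ β : Path x x, (∀ t, β t ∈ U) ∧ g' = g * loopClass β}}

/-- The quasitopological fundamental group topology `π₁^{qtop}(X,x)`: the quotient of the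
compact-open topology on the loop space. -/
def qTop (x : X) : TopologicalSpace (FundamentalGroup X x) :=
  TopologicalSpace.coinduced loopClass inferInstance

/-- A map `p : E → X` (with `E` carrying the topology `tE`) has the unique path
lifting property. -/
def UniquePathLifting {E : Type*} (tE : TopologicalSpace E) (p : E → X) : Prop :=
  letI := tE
  ∀ f g : C(unitInterval, E), (∀ t, p (f t) = p (g t)) → f 0 = g 0 → f = g

/-- The small loop subgroup `π₁ˢ(X,x)`. -/
def smallLoopSubgroup (x : X) : Subgroup (FundamentalGroup X x) :=
  ⨅ (U : Set X) (_ : IsOpen U) (_ : x ∈ U), loopSubgroup x U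

/-- The Spanier group `π₁^{sp}(X,x)`: the intersection of all Spanier subgroups. -/
def spanierGroup (x : X) : Subgroup (FundamentalGroup X x) :=
  ⨅ (𝒰 : Set (Set X)) (_ : IsOpenCover 𝒰), spanier x 𝒰

/-- The path Spanier subgroup `π̃(𝒱, x₀)` of a path open cover `𝒱`. -/
def pathSpanier {b : X} (𝒱 : PathsFrom b → Set X) : Subgroup (FundamentalGroup X b) :=
  Subgroup.closure
    {g | ∃ (p : PathsFrom b) (β : Path p.1 p.1), (∀ t, β t ∈ 𝒱 p) ∧
          g = loopClass ((p.2.trans β).trans p.2.symm)}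

end Paper
end

/-! Let `g = [α β̄] ∉ H`. Homotopical Hausdorffness at `x₀` gives a neighbourhood `U` of `x₀`
whose loops avoid the coset `H g`, and local quasinormality shrinks it to `W` with
`H · π₁(W) = π₁(W) · H`; hence `K = H · π₁(W)` is a subgroup not containing `g`. By the SLT
property each `α(u)` has a neighbourhood `V u` whose loops, conjugated by `α|[0,u]`, lie in `K`.
A Lebesgue number gives a partition of `[0,1]` each of whose pieces, together with the segment
back to some anchor `u`, is mapped by `α` into `V u`. If `γ` agrees with `α` at the partition
points and follows the `V u` piecewise, then `[γ ᾱ]` telescopes into a product of such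
conjugated loops and lies in `K`; since `[γ β̄] = [γ ᾱ][α β̄]`, `[γ β̄] ∈ H` would put `g` in `K`. -/

theorem Subgroup.coe_sup_of_mul_comm {G : Type*} [Group G] (H K : Subgroup G)
    (hHK : (H : Set G) * K = K * H) : ((H ⊔ K : Subgroup G) : Set G) = H * K := by
  rw [Subgroup.sup_eq_closure_mul]
  refine Set.Subset.antisymm (fun x hx => ?_) Subgroup.subset_closure
  induction hx using Subgroup.closure_induction'' with
  | one => exact ⟨1, H.one_mem, 1, K.one_mem, mul_one 1⟩
  | mem _ hx => exact hx
  | inv_mem x hx =>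
    obtain ⟨h, hh, k, hk, rfl⟩ := hx
    rw [mul_inv_rev, hHK]
    exact Set.mul_mem_mul (K.inv_mem hk) (H.inv_mem hh)
  | mul _ _ _ _ hx hy =>
    obtain ⟨h, hh, k, hk, rfl⟩ := hx
    obtain ⟨h', hh', k', hk', rfl⟩ := hy
    obtain ⟨h'', hh'', k'', hk'', he : h'' * k'' = k * h'⟩ : k * h' ∈ (H : Set G) * K :=
      hHK ▸ Set.mul_mem_mul hk hh'
    refine ⟨h * h'', H.mul_mem hh hh'', k'' * k', K.mul_mem hk'' hk', ?_⟩
    change h * h'' * (k'' * k') = h * k * (h' * k')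
    rw [mul_assoc h, ← mul_assoc h'', he]
    group

namespace CategoryTheory

theorem comp_inv_mem_of_forall_conj_mem {C : Type*} [Groupoid C] {o : C} (K : Subgroup (End o))
    {n : ℕ} {p : Fin (n + 1) → C} (a b : ∀ j, o ⟶ p j)
    (A B : ∀ k : Fin n, p k.castSucc ⟶ p k.succ)
    (ha : ∀ k, a k.succ = a k.castSucc ≫ A k) (hb : ∀ k, b k.succ = b k.castSucc ≫ B k)
    (h0 : b 0 = a 0) (hK : ∀ k, a k.castSucc ≫ B k ≫ inv (A k) ≫ inv (a k.castSucc) ∈ K)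
    (j : Fin (n + 1)) : b j ≫ inv (a j) ∈ K := by
  induction j using Fin.induction with
  | zero => rw [h0, IsIso.hom_inv_id]; exact K.one_mem
  | succ k ih =>
    simpa [End.mul_def, ha, hb] using K.mul_mem (hK k) ih

end CategoryTheory

namespace unitInterval

open Set

theorem ordConnected_ball (u : I) (r : ℝ) : (Metric.ball u r).OrdConnected := by
  refine ⟨fun a ha b hb s hs => ?_⟩
  simp only [Metric.mem_ball, Subtype.dist_eq, Real.dist_eq, abs_sub_lt_iff] at ha hb ⊢
  have h₁ : (a : ℝ) ≤ s := hs.1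
  have h₂ : (s : ℝ) ≤ b := hs.2
  constructor <;> linarith [ha.1, hb.1, ha.2, hb.2]

noncomputable def uniformPartition (n : ℕ) (j : Fin (n + 1)) : I :=
  ⟨j / n, div_mem j.val.cast_nonneg n.cast_nonneg (Nat.cast_le.2 j.is_le)⟩

theorem uniformPartition_zero (n : ℕ) : uniformPartition n 0 = 0 := by
  ext; simp [uniformPartition]

theorem uniformPartition_last {n : ℕ} (hn : n ≠ 0) : uniformPartition n (Fin.last n) = 1 := by
  ext; simp [uniformPartition, hn]

theorem uniformPartition_strictMono {n : ℕ} (hn : 0 < n) : StrictMono (uniformPartition n) := by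
  intro i j hij
  show (i : ℝ) / n < j / n
  gcongr
  exact_mod_cast hij

theorem dist_uniformPartition_succ {n : ℕ} (j : Fin n) :
    dist (uniformPartition n j.succ) (uniformPartition n j.castSucc) = 1 / n := by
  rw [Subtype.dist_eq, Real.dist_eq]
  simp only [uniformPartition, Fin.val_succ, Fin.val_castSucc]
  rw [← sub_div, Nat.cast_succ, add_sub_cancel_left, abs_of_nonneg (by positivity)]

theorem exists_uniformPartition_anchored {O : I → Set I} (hO : ∀ u, IsOpen (O u))
    (hu : ∀ u, u ∈ O u) :
    ∃ n, 0 < n ∧ ∀ j : Fin n, ∃ u,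
      uIcc u (uniformPartition n j.castSucc) ⊆ O u ∧
        Icc (uniformPartition n j.castSucc) (uniformPartition n j.succ) ⊆ O u := by
  choose r hr hrO using fun u => Metric.isOpen_iff.1 (hO u) u (hu u)
  obtain ⟨δ, hδ, hball⟩ := lebesgue_number_lemma_of_metric isCompact_univ
    (fun u => Metric.isOpen_ball (x := u) (ε := r u))
    (fun u _ => Set.mem_iUnion.2 ⟨u, Metric.mem_ball_self (hr u)⟩)
  obtain ⟨m, hm⟩ := exists_nat_one_div_lt hδ
  refine ⟨m + 1, m.succ_pos, fun j => ?_⟩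
  obtain ⟨u, hδu⟩ := hball (uniformPartition (m + 1) j.castSucc) trivial
  have hleft := hδu (Metric.mem_ball_self hδ)
  have hright : uniformPartition (m + 1) j.succ ∈ Metric.ball u (r u) := by
    refine hδu ?_
    rw [Metric.mem_ball, dist_uniformPartition_succ]
    exact_mod_cast hm
  refine ⟨u, ?_, ?_⟩
  · exact ((ordConnected_ball u (r u)).uIcc_subset (Metric.mem_ball_self (hr u)) hleft).trans
      (hrO u)
  · exact ((ordConnected_ball u (r u)).out hleft hright).trans (hrO u)

end unitInterval

namespace Paper

open CategoryTheory unitInterval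

variable {X : Type*} [TopologicalSpace X]

section

variable {x₀ x y : X}

def pathClass (p : Path x y) : FundamentalGroupoid.mk x ⟶ FundamentalGroupoid.mk y :=
  Path.Homotopic.Quotient.mk p

@[simp] theorem pathClass_trans {z : X} (p : Path x y) (q : Path y z) :
    pathClass (p.trans q) = pathClass p ≫ pathClass q := rfl

@[simp] theorem pathClass_symm (p : Path x y) : pathClass p.symm = inv (pathClass p) := by
  rw [← Groupoid.inv_eq_inv]; rfl

@[simp] theorem pathClass_refl (x : X) : pathClass (Path.refl x) = 𝟙 _ := rfl

theorem pathClass_cast {x' y' : X} (p : Path x y) (hx : x' = x) (hy : y' = y) :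
    pathClass (p.cast hx hy) =
      eqToHom (congrArg FundamentalGroupoid.mk hx) ≫ pathClass p ≫
        eqToHom (congrArg _ hy.symm) := by
  subst hx hy; simp

theorem loopClass_eq_pathClass (γ : Path x x) : loopClass γ = pathClass γ := rfl

/-- The endpoints are renamed along `ha`, `hb`, so that pieces of two paths which agree at the
partition points become composable morphisms. -/
def subpathClass (γ : Path x y) {a b : X} (s t : I) (ha : γ s = a) (hb : γ t = b) :
    FundamentalGroupoid.mk a ⟶ FundamentalGroupoid.mk b :=
  pathClass ((γ.subpath s t).cast ha.symm hb.symm)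

@[simp] theorem subpathClass_rfl (γ : Path x y) (s t : I) :
    subpathClass γ s t rfl rfl = pathClass (γ.subpath s t) := rfl

theorem subpathClass_comp (γ : Path x y) {a b c : X} (r s t : I) (ha : γ r = a) (hb : γ s = b)
    (hc : γ t = c) :
    subpathClass γ r s ha hb ≫ subpathClass γ s t hb hc = subpathClass γ r t ha hc := by
  subst ha hb hc
  exact Path.Homotopic.Quotient.eq.2 ⟨Path.Homotopy.subpathTransSubpath γ r s t⟩

theorem subpathClass_zero_eq_of_eq_zero (γ α : Path x₀ x) {s : I} (hs : s = 0)
    (h : γ s = α s) :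
    subpathClass γ 0 s γ.source h = subpathClass α 0 s α.source rfl := by
  subst hs
  simp [subpathClass, pathClass_cast]

theorem subpathClass_zero_comp_inv_of_eq_one (γ α : Path x₀ x) {s : I} (hs : s = 1)
    (h : γ s = α s) :
    subpathClass γ 0 s γ.source h ≫ inv (subpathClass α 0 s α.source rfl) =
      pathClass γ ≫ inv (pathClass α) := by
  subst hs
  simp [subpathClass, pathClass_cast]

theorem loopClass_trans_symm_mem_of_partition (K : Subgroup (FundamentalGroup X x₀))
    {α γ : Path x₀ x} {n : ℕ} {t : Fin (n + 1) → I} (ht₀ : t 0 = 0)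
    (ht₁ : t (Fin.last n) = 1)
    (hγt : ∀ j, γ (t j) = α (t j))
    (hK : ∀ k : Fin n, subpathClass α 0 (t k.castSucc) α.source rfl ≫
      subpathClass γ (t k.castSucc) (t k.succ) (hγt _) (hγt _) ≫
      inv (subpathClass α (t k.castSucc) (t k.succ) rfl rfl) ≫
      inv (subpathClass α 0 (t k.castSucc) α.source rfl) ∈ K) :
    loopClass (γ.trans α.symm) ∈ K := by
  have := comp_inv_mem_of_forall_conj_mem K (p := fun j => FundamentalGroupoid.mk (α (t j)))
    (fun j => subpathClass α 0 (t j) α.source rfl)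
    (fun j => subpathClass γ 0 (t j) γ.source (hγt j))
    (fun k => subpathClass α (t k.castSucc) (t k.succ) rfl rfl)
    (fun k => subpathClass γ (t k.castSucc) (t k.succ) (hγt _) (hγt _))
    (fun k => (subpathClass_comp ..).symm) (fun k => (subpathClass_comp ..).symm)
    (subpathClass_zero_eq_of_eq_zero γ α ht₀ _) hK (Fin.last n)
  rwa [subpathClass_zero_comp_inv_of_eq_one γ α ht₁, ← pathClass_symm, ← pathClass_trans]
    at this

/-- The piece of `γ` is compared with that of `α` inside `V`, and the resulting loop is carried
back to the anchor `u`, where the hypothesis on `V` applies. -/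
theorem conj_subpathClass_mem_of_image_subset (K : Subgroup (FundamentalGroup X x₀))
    {α γ : Path x₀ x} {V : Set X} {u r s : I}
    (hV : ∀ β : Path (α u) (α u), (∀ t, β t ∈ V) →
      loopClass ((((α.subpath 0 u).cast α.source.symm rfl).trans β).trans
        ((α.subpath 0 u).cast α.source.symm rfl).symm) ∈ K)
    (hαu : α '' Set.uIcc u r ⊆ V) (hα : α '' Set.Icc r s ⊆ V)
    (hγ : γ '' Set.Icc r s ⊆ V)
    (hrs : r ≤ s) (hr : γ r = α r) (hs : γ s = α s) :
    subpathClass α 0 r α.source rfl ≫ subpathClass γ r s hr hs ≫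
      inv (subpathClass α r s rfl rfl) ≫ inv (subpathClass α 0 r α.source rfl) ∈ K := by
  let β := (((α.subpath u r).trans ((γ.subpath r s).cast hr.symm hs.symm)).trans
    (α.subpath r s).symm).trans (α.subpath u r).symm
  have hβV : ∀ t, β t ∈ V := by
    rw [← Set.range_subset_iff]
    simp only [β, Path.trans_range, Path.symm_range, Path.cast_coe, Path.range_subpath,
      Set.uIcc_of_le hrs, Set.union_subset_iff]
    exact ⟨⟨⟨hαu, hγ⟩, hα⟩, hαu⟩
  have key := hV β hβV
  rw [← subpathClass_comp α 0 u r α.source rfl rfl, subpathClass_rfl, IsIso.inv_comp]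
  simpa [loopClass_eq_pathClass, β, subpathClass, -Path.symm_subpath] using key

theorem loopClass_trans_symm_mul (α β γ : Path x₀ x) :
    loopClass (α.trans β.symm) * loopClass (γ.trans α.symm) = loopClass (γ.trans β.symm) := by
  simp [loopClass_eq_pathClass, End.mul_def]

theorem loopClass_refl_conj (β : Path x x) :
    loopClass (((Path.refl x).trans β).trans (Path.refl x).symm) = loopClass β := by
  simp [loopClass_eq_pathClass]

theorem piSub_refl (x : X) (V : Set X) : piSub (Path.refl x) V = loopSubgroup x V := by
  simp only [piSub, loopSubgroup, loopClass_refl_conj]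

theorem exists_loop_of_mem_loopSubgroup {W : Set X} (hx : x ∈ W) {g : FundamentalGroup X x}
    (hg : g ∈ loopSubgroup x W) : ∃ l : Path x x, (∀ t, l t ∈ W) ∧ loopClass l = g := by
  induction hg using Subgroup.closure_induction with
  | mem g hg =>
    obtain ⟨l, hl, rfl⟩ := hg
    exact ⟨l, hl, rfl⟩
  | one => exact ⟨Path.refl x, fun _ => hx, rfl⟩
  | mul _ _ _ _ iha ihb =>
    obtain ⟨la, hla, rfl⟩ := iha
    obtain ⟨lb, hlb, rfl⟩ := ihb
    refine ⟨lb.trans la, Set.range_subset_iff.1 ?_, rfl⟩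
    rw [Path.trans_range]
    exact Set.union_subset (Set.range_subset_iff.2 hlb) (Set.range_subset_iff.2 hla)
  | inv _ _ ih =>
    obtain ⟨l, hl, rfl⟩ := ih
    exact ⟨l.symm, fun t => hl _, rfl⟩

theorem not_mem_sup_loopSubgroup {H : Subgroup (FundamentalGroup X x₀)}
    {g : FundamentalGroup X x₀} {U W : Set X}
    (hU : ∀ β : Path x₀ x₀, (∀ t, β t ∈ U) → ∀ h ∈ H,
      loopClass (((Path.refl x₀).trans β).trans (Path.refl x₀).symm) ≠ h * g)
    (hWU : W ⊆ U) (hx₀W : x₀ ∈ W)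
    (hHW : (H : Set (FundamentalGroup X x₀)) * loopSubgroup x₀ W = loopSubgroup x₀ W * H) :
    g ∉ H ⊔ loopSubgroup x₀ W := by
  rw [← SetLike.mem_coe, Subgroup.coe_sup_of_mul_comm _ _ hHW]
  rintro ⟨h, hh, _, hl, hhl⟩
  obtain ⟨l, hlW, rfl⟩ := exists_loop_of_mem_loopSubgroup hx₀W hl
  refine hU l (fun t => hWU (hlW t)) h⁻¹ (H.inv_mem hh) ?_
  rw [loopClass_refl_conj, ← hhl, inv_mul_cancel_left]

end

theorem hH_implies_hpH_general {x₀ : X}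
    (H : Subgroup (FundamentalGroup X x₀)) (hSLT : SLTAt H)
    (hq : LocallyQuasinormal H) (hhH : HomotopicallyHausdorffRel H) :
    HomotopicallyPathHausdorffRel H := by
  intro x α β hαβ
  obtain ⟨U, hUo, hx₀U, hU⟩ := hhH x₀ (Path.refl x₀) _ hαβ
  obtain ⟨W, hWU, hWo, hx₀W, hHW⟩ := hq x₀ (Path.refl x₀) U hUo hx₀U
  rw [piSub_refl] at hHW
  set K := H ⊔ loopSubgroup x₀ W
  have hK : (K : Set (FundamentalGroup X x₀)) = H * loopSubgroup x₀ W :=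
    Subgroup.coe_sup_of_mul_comm _ _ hHW
  choose V hVo hαV hVK using fun u : I =>
    hSLT (α u) ((α.subpath 0 u).cast α.source.symm rfl) W hWo hx₀W
  obtain ⟨n, hn, hpart⟩ := exists_uniformPartition_anchored
    (fun u => (hVo u).preimage α.continuous) hαV
  choose u hu using hpart
  refine ⟨n, hn, uniformPartition n, fun i => V (u i), uniformPartition_strictMono hn,
    uniformPartition_zero n, uniformPartition_last hn.ne', fun i => ⟨hVo _, (hu i).2⟩, ?_⟩
  intro γ hγV hγα hγβ
  have hγαK : loopClass (γ.trans α.symm) ∈ K :=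
    loopClass_trans_symm_mem_of_partition K (uniformPartition_zero n)
      (uniformPartition_last hn.ne') hγα fun k => conj_subpathClass_mem_of_image_subset K
        (fun β hβ => by rw [← SetLike.mem_coe, hK]; exact hVK _ β hβ)
        (Set.image_subset_iff.2 (hu k).1) (Set.image_subset_iff.2 (hu k).2)
        (Set.mapsTo_iff_image_subset.1 (hγV k)) ((uniformPartition_strictMono hn).monotone
          (Fin.castSucc_le_succ k)) _ _
  refine not_mem_sup_loopSubgroup hU hWU hx₀W hHW ?_
  rw [← mul_inv_cancel_right (loopClass (α.trans β.symm)) (loopClass (γ.trans α.symm)),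
    loopClass_trans_symm_mul]
  exact K.mul_mem (Subgroup.mem_sup_left hγβ) (K.inv_mem hγαK)

/-- Theorem 3.4: if `X` is `H`-SLT at `x₀`, `H` is locally quasinormal, and
`X` is homotopically Hausdorff relative to `H`, then `X` is homotopically path Hausdorff
relative to `H`. -/
theorem hH_implies_hpH [PathConnectedSpace X] {x₀ : X}
    (H : Subgroup (FundamentalGroup X x₀)) (hSLT : SLTAt H)
    (hq : LocallyQuasinormal H) (hhH : HomotopicallyHausdorffRel H) :
    HomotopicallyPathHausdorffRel H :=
  hH_implies_hpH_general H hSLT hq hhH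

end Paper
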